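/- arXiv:1810.00621 — 6 statements merged into one kernel-verified Lean document; each statement's English description precedes it below -/
import Mathlib

section
/- There do not exist functions f1, f2, f3 from {0,1}×{0,1} to R such that for all i,j,k in {0,1}, f1(i,j) + f2(j,k) + f3(i,k) = i·j·k. -/
/-- the function (i,j,k) ↦ i·j·k on {0,1}³ cannot be written as
f1(i,j) + f2(j,k) + f3(i,k). -/
theorem no_two_way_decomposition_of_and :
    ¬ ∃ f1 f2 f3 : Fin 2 → Fin 2 → ℝ, ∀ i j k : Fin 2,
      f1 i j + f2 j k + f3 i k = ((i : ℕ) : ℝ) * ((j : ℕ) : ℝ) * ((k : ℕ) : ℝ) := by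
  rintro ⟨f1, f2, f3, h⟩
  have h000 := h 0 0 0
  have h001 := h 0 0 1
  have h010 := h 0 1 0
  have h011 := h 0 1 1
  have h100 := h 1 0 0
  have h101 := h 1 0 1
  have h110 := h 1 1 0
  have h111 := h 1 1 1
  norm_num at *
  linarith
end

section
/- Consequently, there are no points a_0,a_1,b_0,b_1,c_0,c_1 in R^d and reals β_1 < β_0 such that ||( a_i + b_j)/2 - c_k||_2 = β_1 when i=j=k=1 and = β_0 otherwise, for all i,j,k in {0,1}. -/
/-!
The squared distance `‖(a_i + b_j)/2 - c_k‖²` expands into a sum of terms each depending on only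
two of the indices `i, j, k`, so its third finite difference over the cube `{0,1}³` vanishes.
For the prescribed distances that difference is `β₁² - β₀²`, which is nonzero since `0 ≤ β₁ < β₀`.
-/

open RealInnerProductSpace

def cubeDiff {M : Type*} [AddCommGroup M] (F : Fin 2 → Fin 2 → Fin 2 → M) : M :=
  F 1 1 1 - F 1 1 0 - F 1 0 1 - F 0 1 1 + F 1 0 0 + F 0 1 0 + F 0 0 1 - F 0 0 0

theorem cubeDiff_eq_zero_of_eq_add {M : Type*} [AddCommGroup M] (F : Fin 2 → Fin 2 → Fin 2 → M)
    (p q r : Fin 2 → Fin 2 → M) (hF : ∀ i j k, F i j k = p i j + q i k + r j k) :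
    cubeDiff F = 0 := by
  simp only [cubeDiff, hF]
  abel

theorem cubeDiff_ite_and {M : Type*} [AddCommGroup M] (u v : M) :
    cubeDiff (fun i j k : Fin 2 => if i = 1 ∧ j = 1 ∧ k = 1 then u else v) = u - v := by
  simp [cubeDiff]

theorem norm_smul_add_sub_sq {E : Type*} [NormedAddCommGroup E] [InnerProductSpace ℝ E]
    (x y z : E) :
    ‖(2 : ℝ)⁻¹ • (x + y) - z‖ ^ 2 = ‖(2 : ℝ)⁻¹ • (x + y)‖ ^ 2 - ⟪x, z⟫ + (‖z‖ ^ 2 - ⟪y, z⟫) := by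
  rw [norm_sub_sq_real, real_inner_smul_left, inner_add_left]
  ring

/-- there are no points a_0,a_1,b_0,b_1,c_0,c_1 ∈ ℝ^d and reals β₁ < β₀ with
‖(a_i+b_j)/2 - c_k‖₂ = β₁ when i=j=k=1 and = β₀ otherwise. -/
theorem no_midpoint_and_gadget_euclidean :
    ¬ ∃ (d : ℕ) (a b c : Fin 2 → EuclideanSpace ℝ (Fin d)) (β₁ β₀ : ℝ),
      β₁ < β₀ ∧ ∀ i j k : Fin 2,
        ‖(2 : ℝ)⁻¹ • (a i + b j) - c k‖
          = if i = 1 ∧ j = 1 ∧ k = 1 then β₁ else β₀ := by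
  rintro ⟨d, a, b, c, β₁, β₀, hlt, h⟩
  have hβ₁ : 0 ≤ β₁ := by simpa using (h 1 1 1).symm.trans_ge (norm_nonneg _)
  set F : Fin 2 → Fin 2 → Fin 2 → ℝ := fun i j k => ‖(2 : ℝ)⁻¹ • (a i + b j) - c k‖ ^ 2
  have hzero : cubeDiff F = 0 :=
    cubeDiff_eq_zero_of_eq_add F (fun i j => ‖(2 : ℝ)⁻¹ • (a i + b j)‖ ^ 2)
      (fun i k => -⟪a i, c k⟫) (fun j k => ‖c k‖ ^ 2 - ⟪b j, c k⟫)
      fun i j k => (norm_smul_add_sub_sq _ _ _).trans (by ring)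
  have hvalue : cubeDiff F = β₁ ^ 2 - β₀ ^ 2 := by
    simp only [F, h, apply_ite (· ^ 2)]
    exact cubeDiff_ite_and _ _
  nlinarith
end

section
/- For any p in [1,∞) with p ≠ 2, there exist points a_0,a_1,b_0,b_1,c_0,c_1 in R^9 and reals β_1 < β_2 such that for all i,j,k in {0,1}, ||c_i - (a_j+b_k)/2||_p^p = β_1 if i=j=k=1 and = β_2 otherwise. -/
/-- for any p ∈ [1,∞), p ≠ 2, there is a coordinate gadget in ℝ⁹. -/
theorem coordinate_gadget_exists (p : ℝ) (hp1 : 1 ≤ p) (hp2 : p ≠ 2) :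
    ∃ (a b c : Fin 2 → Fin 9 → ℝ) (β₁ β₂ : ℝ), β₁ < β₂ ∧
      ∀ i j k : Fin 2,
        ∑ ℓ : Fin 9, |c i ℓ - (a j ℓ + b k ℓ) / 2| ^ p
          = if i = 1 ∧ j = 1 ∧ k = 1 then β₁ else β₂ := by
  have hp0 : p ≠ 0 := by linarith
  have h1 : |(1:ℝ)| ^ p = 1 := by rw [abs_one, Real.one_rpow]
  have h0 : |(0:ℝ)| ^ p = 0 := by rw [abs_zero, Real.zero_rpow hp0]
  have hm1 : |(-1:ℝ)| ^ p = 1 := by rw [abs_neg, abs_one, Real.one_rpow]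
  have h2 : |(2:ℝ)| ^ p = (2:ℝ) ^ p := by rw [abs_of_nonneg (by norm_num : (0:ℝ) ≤ 2)]
  have hm2 : |(-2:ℝ)| ^ p = (2:ℝ) ^ p := by rw [abs_neg, abs_of_nonneg (by norm_num : (0:ℝ) ≤ 2)]
  have h4 : (2:ℝ) ^ (2:ℝ) = 4 := by
    rw [show (2:ℝ) = ((2:ℕ):ℝ) by norm_num, Real.rpow_natCast]; norm_num
  rcases lt_or_gt_of_ne hp2 with hlt | hgt
  · -- p < 2 : β₁ = 2^p < 4 = β₂
    refine ⟨![![0,0,0,0,0,-2,0,0,0], ![-2,2,0,2,0,0,0,0,0]],   -- a j ℓ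
            ![![0,0,0,0,0,0,-2,0,0], ![-2,0,2,-2,0,0,0,0,0]],  -- b k ℓ
            ![![-1,0,0,0,-1,0,0,0,0], ![0,1,1,0,0,0,0,0,0]],   -- c i ℓ
            (2:ℝ) ^ p, 4, ?_, ?_⟩
    · have := (Real.rpow_lt_rpow_left_iff (x := (2:ℝ)) (by norm_num)).mpr hlt
      rw [h4] at this; exact this
    · intro i j k
      fin_cases i <;> fin_cases j <;> fin_cases k <;>
        simp [Fin.sum_univ_succ] <;> norm_num [Real.zero_rpow hp0, h0, h1, hm1, h2, hm2]
  · -- p > 2 : β₁ = 4 < 2^p = β₂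
    set s : ℝ := ((2:ℝ) ^ (p - 1) - 1) ^ p⁻¹ with hs
    have hA : (0:ℝ) ≤ (2:ℝ) ^ (p - 1) - 1 := by
      nlinarith [(Real.rpow_le_rpow_left_iff (x := (2:ℝ)) (by norm_num : (1:ℝ) < 2)).mpr
        (by linarith : (0:ℝ) ≤ p - 1), Real.rpow_zero (2:ℝ)]
    have hs0 : 0 ≤ s := Real.rpow_nonneg hA _
    have hsp : |s| ^ p = (2:ℝ) ^ (p - 1) - 1 := by
      rw [abs_of_nonneg hs0, hs, Real.rpow_inv_rpow hA hp0]
    have hsm : |(-s)| ^ p = (2:ℝ) ^ (p - 1) - 1 := by rw [abs_neg]; exact hsp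
    have hsm2 : |(-(2*s))/2| ^ p = (2:ℝ) ^ (p - 1) - 1 := by
      rw [show (-(2*s))/2 = -s by ring]; exact hsm
    have h2p : (2:ℝ) ^ p = 2 * ((2:ℝ) ^ (p - 1)) := by
      rw [← Real.rpow_one_add' (by norm_num) (by intro h; apply hp0; linarith)]
      ring_nf
    refine ⟨![![0,0,0,0,0,0,0,0,0], ![-2,2*s,0,2*s,0,-2,0,0,0]],   -- a j ℓ
            ![![0,0,0,0,0,0,0,0,0], ![-2,0,2*s,-2*s,0,0,-2,0,0]],  -- b k ℓ
            ![![-2,0,0,0,0,0,0,0,0], ![-1,s,s,0,1,0,0,0,0]],       -- c i ℓ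
            4, (2:ℝ) ^ p, ?_, ?_⟩
    · have := (Real.rpow_lt_rpow_left_iff (x := (2:ℝ)) (by norm_num)).mpr hgt
      rw [h4] at this; exact this
    · intro i j k
      fin_cases i <;> fin_cases j <;> fin_cases k <;>
        simp [Fin.sum_univ_succ] <;>
        norm_num [Real.zero_rpow hp0, h0, h1, hm1, h2, hm2, hsp, hsm, hsm2] <;>
        (try linarith [hsp, hsm, h2p])
end

section
/- Under the setup of the vector gadget, ||c' - (a'+b')/2||_p ≤ δ if and only if sum_{ℓ in [d]} a[ℓ]·b[ℓ]·c[ℓ] ≠ 0, where δ^p = d·β_2 - (β_2 - β_1) and β_1 < β_2. -/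
/-- ‖c' - (a'+b')/2‖_p ≤ δ iff ∑_ℓ a[ℓ]·b[ℓ]·c[ℓ] ≠ 0,
where δ = (d·β₂ - (β₂-β₁))^{1/p}. -/
theorem vector_gadget_threshold (d : ℕ) (hd : 0 < d) (p β₁ β₂ δ : ℝ) (hp : 1 ≤ p)
    (hβ : β₁ < β₂)
    (hδ : δ = ((d : ℝ) * β₂ - (β₂ - β₁)) ^ (1 / p))
    (A B C : Fin 2 → Fin 9 → ℝ)
    (hG : ∀ i j k : Fin 2,
      ∑ r : Fin 9, |C i r - (A j r + B k r) / 2| ^ p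
        = if i = 1 ∧ j = 1 ∧ k = 1 then β₁ else β₂)
    (a b c : Fin d → Fin 2) :
    (∑ ℓ : Fin d, ∑ r : Fin 9,
        |C (c ℓ) r - (A (a ℓ) r + B (b ℓ) r) / 2| ^ p) ^ (1 / p) ≤ δ
      ↔ (∑ ℓ : Fin d, ((a ℓ : ℕ) : ℝ) * ((b ℓ : ℕ) : ℝ) * ((c ℓ : ℕ) : ℝ)) ≠ 0 := by
  have hpp : 0 < p := lt_of_lt_of_le one_pos hp
  have hβ₁ : 0 ≤ β₁ := by
    have h := hG 1 1 1
    simp only [and_self, if_true] at h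
    rw [← h]
    exact Finset.sum_nonneg fun r _ => Real.rpow_nonneg (abs_nonneg _) p
  have hβ₂ : 0 ≤ β₂ := le_of_lt (lt_of_le_of_lt hβ₁ hβ)
  have hT : (∑ ℓ : Fin d, ∑ r : Fin 9,
      |C (c ℓ) r - (A (a ℓ) r + B (b ℓ) r) / 2| ^ p)
      = ∑ ℓ : Fin d, (if a ℓ = 1 ∧ b ℓ = 1 ∧ c ℓ = 1 then β₁ else β₂) := by
    refine Finset.sum_congr rfl fun ℓ _ => ?_
    rw [hG (c ℓ) (a ℓ) (b ℓ)]
    by_cases h : a ℓ = 1 ∧ b ℓ = 1 ∧ c ℓ = 1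
    · obtain ⟨h1, h2, h3⟩ := h
      simp [h1, h2, h3]
    · rw [if_neg, if_neg h]
      tauto
  have hTnn : 0 ≤ ∑ ℓ : Fin d, (if a ℓ = 1 ∧ b ℓ = 1 ∧ c ℓ = 1 then β₁ else β₂) :=
    Finset.sum_nonneg fun ℓ _ => by split <;> assumption
  have hthr : 0 ≤ (d : ℝ) * β₂ - (β₂ - β₁) := by
    have h1 : (1 : ℝ) ≤ (d : ℝ) := by exact_mod_cast hd
    nlinarith
  have hkey : (∑ ℓ : Fin d, (if a ℓ = 1 ∧ b ℓ = 1 ∧ c ℓ = 1 then β₁ else β₂))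
      ≤ (d : ℝ) * β₂ - (β₂ - β₁) ↔ ∃ ℓ : Fin d, a ℓ = 1 ∧ b ℓ = 1 ∧ c ℓ = 1 := by
    constructor
    · intro hle
      by_contra hno
      push_neg at hno
      have heq : (∑ ℓ : Fin d, (if a ℓ = 1 ∧ b ℓ = 1 ∧ c ℓ = 1 then β₁ else β₂))
          = (d : ℝ) * β₂ := by
        rw [Finset.sum_congr rfl (fun ℓ _ => if_neg (by
          intro ⟨h1, h2, h3⟩; exact hno ℓ h1 h2 h3))]
        simp [mul_comm]
      rw [heq] at hle
      linarith
    · rintro ⟨ℓ₀, h1, h2, h3⟩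
      have hle : (∑ ℓ : Fin d, (if a ℓ = 1 ∧ b ℓ = 1 ∧ c ℓ = 1 then β₁ else β₂))
          ≤ ∑ ℓ : Fin d, (β₂ - if ℓ = ℓ₀ then β₂ - β₁ else 0) := by
        refine Finset.sum_le_sum fun ℓ _ => ?_
        by_cases h : ℓ = ℓ₀
        · subst h
          simp [h1, h2, h3]
        · simp only [if_neg h, sub_zero]
          split <;> linarith
      calc (∑ ℓ : Fin d, (if a ℓ = 1 ∧ b ℓ = 1 ∧ c ℓ = 1 then β₁ else β₂)) ≤ _ := hle
        _ = (d : ℝ) * β₂ - (β₂ - β₁) := by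
          rw [Finset.sum_sub_distrib, Finset.sum_const, Finset.sum_ite_eq' Finset.univ ℓ₀]
          simp [mul_comm]
  have hfin2 : ∀ x : Fin 2, x = 0 ∨ x = 1 := by decide
  have hrhs : (∑ ℓ : Fin d, ((a ℓ : ℕ) : ℝ) * ((b ℓ : ℕ) : ℝ) * ((c ℓ : ℕ) : ℝ)) ≠ 0
      ↔ ∃ ℓ : Fin d, a ℓ = 1 ∧ b ℓ = 1 ∧ c ℓ = 1 := by
    rw [← not_iff_not, not_not]
    rw [Finset.sum_eq_zero_iff_of_nonneg (fun ℓ _ => by positivity)]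
    push_neg
    constructor
    · intro h ℓ h1 h2 h3
      have := h ℓ (Finset.mem_univ ℓ)
      rw [h1, h2, h3] at this
      norm_num at this
    · intro h ℓ _
      rcases hfin2 (a ℓ) with ha | ha
      · simp [ha]
      rcases hfin2 (b ℓ) with hb | hb
      · simp [hb]
      rcases hfin2 (c ℓ) with hc | hc
      · simp [hc]
      exact absurd hc (h ℓ ha hb)
  rw [hT, hδ, hrhs, ← hkey]
  exact Real.rpow_le_rpow_iff hTnn hthr (by positivity)
end

section
/- The Cell Reachability recurrence: for any cell j ≥ 2 and cost bound k ≥ 0, t_j(k) = a_j if k ≥ λ_{j-1}; t_j(k) = max(a_j, t_{j-1}(k)) if k < λ_{j-1} and t_{j-1}(k) ≤ b_j; and t_j(k) = ∞ if k < λ_{j-1} and t_{j-1}(k) > b_j. -/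
/-- First reachable point on passage `j` coming from cell `j'` (∞ if unreachable). -/
noncomputable def frp (a b : ℕ → ℝ) (j' j : ℕ) : EReal :=
  sInf {t : EReal | ∃ x : ℕ → ℝ,
    (∀ i, j' < i → i ≤ j → x i ∈ Set.Icc (a i) (b i)) ∧
    (∀ i, j' < i → i < j → x i ≤ x (i + 1)) ∧ t = (x j : EReal)}

/-- `tval a b lam j k` = first reachable point on passage `j` from a cell `j'`
(1 ≤ j' < j) of entry-cost `lam j' ≤ k`. -/
noncomputable def tval (a b : ℕ → ℝ) (lam : ℕ → ℕ) (j k : ℕ) : EReal :=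
  sInf {v : EReal | ∃ j', 1 ≤ j' ∧ j' < j ∧ lam j' ≤ k ∧ v = frp a b j' j}

/-- Cell `j` is reachable from cell `j' < j` through the consecutive passages. -/
def reach (a b : ℕ → ℝ) (j' j : ℕ) : Prop :=
  ∃ x : ℕ → ℝ,
    (∀ i, j' < i → i ≤ j → x i ∈ Set.Icc (a i) (b i)) ∧
    ∀ i, j' < i → i < j → x i ≤ x (i + 1)

/-- Minimal monotone chain starting after `j'`. -/
noncomputable def Mr (a : ℕ → ℝ) (j' : ℕ) : ℕ → ℝ
  | 0 => a 0
  | i + 1 => if i + 1 ≤ j' + 1 then a (i + 1) else max (Mr a j' i) (a (i + 1))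

lemma Mr_base (a : ℕ → ℝ) (j' : ℕ) : Mr a j' (j' + 1) = a (j' + 1) := by
  rw [Mr, if_pos le_rfl]

lemma Mr_step (a : ℕ → ℝ) {j' i : ℕ} (h : j' < i) :
    Mr a j' (i + 1) = max (Mr a j' i) (a (i + 1)) := by
  rw [Mr, if_neg (by omega)]

lemma le_Mr (a : ℕ → ℝ) {j' i : ℕ} (h : j' < i) : a i ≤ Mr a j' i := by
  match i, h with
  | l + 1, h =>
    rw [Mr]
    split
    · exact le_rfl
    · exact le_max_right _ _

lemma Mr_mono (a : ℕ → ℝ) {j' i : ℕ} (h : j' < i) : Mr a j' i ≤ Mr a j' (i + 1) := by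
  rw [Mr_step a h]; exact le_max_left _ _

lemma chain_ge (a b : ℕ → ℝ) (j' m : ℕ) (x : ℕ → ℝ)
    (hx1 : ∀ i, j' < i → i ≤ m → x i ∈ Set.Icc (a i) (b i))
    (hx2 : ∀ i, j' < i → i < m → x i ≤ x (i + 1)) :
    ∀ i, j' < i → i ≤ m → Mr a j' i ≤ x i := by
  intro i
  induction i with
  | zero => intro h; omega
  | succ l ih =>
    intro h1 h2
    by_cases hl : j' < l
    · rw [Mr_step a hl]
      have hxl := ih hl (by omega)
      have hmono := hx2 l hl (by omega)
      have hic := (hx1 (l + 1) h1 h2).1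
      exact max_le (by linarith) hic
    · have hle : l = j' := by omega
      subst hle
      rw [Mr_base]
      exact (hx1 _ h1 h2).1

lemma frp_of_feasible (a b : ℕ → ℝ) {j' m : ℕ} (hm : j' < m)
    (hf : ∀ i, j' < i → i ≤ m → Mr a j' i ≤ b i) :
    frp a b j' m = ((Mr a j' m : ℝ) : EReal) := by
  apply le_antisymm
  · apply sInf_le
    exact ⟨Mr a j', fun i h1 h2 => ⟨le_Mr a h1, hf i h1 h2⟩,
      fun i h1 _ => Mr_mono a h1, rfl⟩
  · apply le_sInf
    rintro t ⟨x, hx1, hx2, rfl⟩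
    exact_mod_cast chain_ge a b j' m x hx1 hx2 m hm le_rfl

lemma frp_of_infeasible (a b : ℕ → ℝ) {j' m i0 : ℕ}
    (h1 : j' < i0) (h2 : i0 ≤ m) (hb : b i0 < Mr a j' i0) :
    frp a b j' m = ⊤ := by
  rw [frp, sInf_eq_top]
  rintro t ⟨x, hx1, hx2, rfl⟩
  have h3 := chain_ge a b j' m x hx1 hx2 i0 h1 h2
  have h4 := (hx1 i0 h1 h2).2
  linarith

lemma frp_ge (a b : ℕ → ℝ) {j' j : ℕ} (h : j' < j) :
    (a j : EReal) ≤ frp a b j' j := by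
  apply le_sInf
  rintro t ⟨x, hx1, _, rfl⟩
  exact_mod_cast (hx1 j h le_rfl).1

lemma frp_base (a b : ℕ → ℝ) (ha : ∀ i, a i < b i) (m : ℕ) :
    frp a b m (m + 1) = (a (m + 1) : EReal) := by
  rw [frp_of_feasible a b (Nat.lt_succ_self m)
    (fun i h1 h2 => by
      have : i = m + 1 := by omega
      subst this
      rw [Mr_base]
      exact (ha _).le), Mr_base]

lemma frp_rec_le (a b : ℕ → ℝ) (ha : ∀ i, a i < b i) {j' m : ℕ} (hm : j' < m)
    (hb : frp a b j' m ≤ (b (m + 1) : EReal)) :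
    frp a b j' (m + 1) = max ((a (m + 1) : ℝ) : EReal) (frp a b j' m) := by
  by_cases hf : ∀ i, j' < i → i ≤ m → Mr a j' i ≤ b i
  · have hm' := frp_of_feasible a b hm hf
    rw [hm'] at hb ⊢
    have hMb : Mr a j' m ≤ b (m + 1) := by exact_mod_cast hb
    have hf' : ∀ i, j' < i → i ≤ m + 1 → Mr a j' i ≤ b i := by
      intro i h1 h2
      rcases Nat.lt_succ_iff_lt_or_eq.mp (Nat.lt_succ_of_le h2) with h | h
      · exact hf i h1 (by omega)
      · subst h
        rw [Mr_step a hm]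
        exact max_le hMb (ha _).le
    rw [frp_of_feasible a b (by omega) hf', Mr_step a hm, max_comm]
    exact_mod_cast rfl
  · exfalso
    push_neg at hf
    obtain ⟨i0, h1, h2, hb0⟩ := hf
    rw [frp_of_infeasible a b h1 h2 hb0] at hb
    exact absurd hb (by simp)

lemma frp_rec_top (a b : ℕ → ℝ) {j' m : ℕ} (hm : j' < m)
    (hb : (b (m + 1) : EReal) < frp a b j' m) :
    frp a b j' (m + 1) = ⊤ := by
  by_cases hf : ∀ i, j' < i → i ≤ m → Mr a j' i ≤ b i
  · rw [frp_of_feasible a b hm hf] at hb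
    have hb' : b (m + 1) < Mr a j' m := by exact_mod_cast hb
    exact frp_of_infeasible a b (show j' < m + 1 by omega) le_rfl
      (lt_of_lt_of_le hb' (Mr_mono a hm))
  · push_neg at hf
    obtain ⟨i0, h1, h2, hb0⟩ := hf
    exact frp_of_infeasible a b h1 (by omega) hb0

/-- the Cell Reachability recurrence for t_j(k). -/
theorem tval_recurrence (a b : ℕ → ℝ) (lam : ℕ → ℕ)
    (ha : ∀ i, a i < b i) (hlam : ∀ i, 0 < lam i)
    (j k : ℕ) (hj : 2 ≤ j) :
    (lam (j - 1) ≤ k → tval a b lam j k = (a j : EReal)) ∧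
    (k < lam (j - 1) → tval a b lam (j - 1) k ≤ (b j : EReal) →
      tval a b lam j k = max (a j : EReal) (tval a b lam (j - 1) k)) ∧
    (k < lam (j - 1) → (b j : EReal) < tval a b lam (j - 1) k →
      tval a b lam j k = ⊤) := by
  obtain ⟨m, rfl⟩ : ∃ m, j = m + 1 := ⟨j - 1, by omega⟩
  have hm1 : 1 ≤ m := by omega
  simp only [Nat.add_sub_cancel]
  have hSm : tval a b lam m k =
      sInf {v : EReal | ∃ j', 1 ≤ j' ∧ j' < m ∧ lam j' ≤ k ∧ v = frp a b j' m} := rfl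
  refine ⟨?_, ?_, ?_⟩
  · intro hk
    apply le_antisymm
    · exact sInf_le ⟨m, hm1, Nat.lt_succ_self m, hk, (frp_base a b ha m).symm⟩
    · apply le_sInf
      rintro v ⟨j', _, h2, _, rfl⟩
      exact frp_ge a b h2
  · intro hk hle
    have hne : {v : EReal | ∃ j', 1 ≤ j' ∧ j' < m ∧ lam j' ≤ k ∧ v = frp a b j' m}.Nonempty := by
      by_contra h
      rw [Set.not_nonempty_iff_eq_empty] at h
      rw [hSm, h, sInf_empty] at hle
      exact absurd hle (by simp)
    have hfin : {v : EReal | ∃ j', 1 ≤ j' ∧ j' < m ∧ lam j' ≤ k ∧ v = frp a b j' m}.Finite := by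
      apply Set.Finite.subset (Set.Finite.image (fun j' => frp a b j' m) (Set.finite_Icc 0 m))
      rintro v ⟨j', _, h2, _, rfl⟩
      exact ⟨j', ⟨Nat.zero_le _, h2.le⟩, rfl⟩
    have hmem := hne.csInf_mem hfin
    rw [← hSm] at hmem
    obtain ⟨j'', hj1, hj2, hj3, hj4⟩ := hmem
    have hle' : frp a b j'' m ≤ (b (m + 1) : EReal) := by rw [← hj4]; exact hle
    apply le_antisymm
    · apply sInf_le
      refine ⟨j'', hj1, by omega, hj3, ?_⟩
      rw [frp_rec_le a b ha hj2 hle', ← hj4]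
    · apply le_sInf
      rintro v ⟨j', h1, h2, h3, rfl⟩
      have h2' : j' < m := by
        have : j' ≠ m := fun e => by rw [e] at h3; omega
        omega
      have hge : tval a b lam m k ≤ frp a b j' m := by
        rw [hSm]; exact sInf_le ⟨j', h1, h2', h3, rfl⟩
      by_cases hcase : frp a b j' m ≤ (b (m + 1) : EReal)
      · rw [frp_rec_le a b ha h2' hcase]
        exact max_le_max le_rfl hge
      · rw [frp_rec_top a b h2' (lt_of_not_ge hcase)]
        exact le_top
  · intro hk hlt
    rw [tval, sInf_eq_top]
    rintro v ⟨j', h1, h2, h3, rfl⟩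
    have h2' : j' < m := by
      have : j' ≠ m := fun e => by rw [e] at h3; omega
      omega
    have hge : tval a b lam m k ≤ frp a b j' m := by
      rw [hSm]; exact sInf_le ⟨j', h1, h2', h3, rfl⟩
    exact frp_rec_top a b h2' (lt_of_lt_of_le hlt hge)
end

section
/- In Cell Reachability, let j' < j - 1 and let frp(j'',j') denote the first reachable point on passage j'' from cell j' for j' < j'' ≤ j; then frp(j,j') ≥ max(a_j, frp(j-1,j')), and if frp(j-1,j') ≤ b_j then frp(j,j') = max(a_j, frp(j-1,j')), else frp(j,j') = ∞. -/
/-- The greedy (pointwise minimal) monotone sequence starting after `j'`. -/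
noncomputable def greedy (a : ℕ → ℝ) (j' : ℕ) : ℕ → ℝ
  | 0 => a (j' + 1)
  | (n+1) => if n + 1 ≤ j' + 1 then a (j' + 1) else max (greedy a j' n) (a (n+1))

lemma greedy_of_le (a : ℕ → ℝ) (j' n : ℕ) (h : n ≤ j' + 1) :
    greedy a j' n = a (j' + 1) := by
  cases n with
  | zero => rfl
  | succ m => simp [greedy, h]

lemma greedy_succ (a : ℕ → ℝ) (j' n : ℕ) (h : j' + 1 ≤ n) :
    greedy a j' (n+1) = max (greedy a j' n) (a (n+1)) := by
  have : ¬ (n + 1 ≤ j' + 1) := by omega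
  simp [greedy, this]

lemma greedy_le_succ (a : ℕ → ℝ) (j' n : ℕ) :
    greedy a j' n ≤ greedy a j' (n+1) := by
  rcases le_or_gt (n+1) (j'+1) with h | h
  · rw [greedy_of_le a j' n (by omega), greedy_of_le a j' (n+1) h]
  · rw [greedy_succ a j' n (by omega)]; exact le_max_left _ _

lemma a_le_greedy (a : ℕ → ℝ) (j' i : ℕ) (h : j' < i) :
    a i ≤ greedy a j' i := by
  cases i with
  | zero => omega
  | succ n =>
    rcases le_or_gt (n+1) (j'+1) with h2 | h2
    · have : n + 1 = j' + 1 := by omega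
      rw [greedy_of_le a j' (n+1) h2, this]
    · rw [greedy_succ a j' n (by omega)]; exact le_max_right _ _

/-- Dominance: greedy is below any feasible sequence. -/
lemma greedy_le (a b : ℕ → ℝ) (j' J : ℕ) (y : ℕ → ℝ)
    (hy1 : ∀ i, j' < i → i ≤ J → y i ∈ Set.Icc (a i) (b i))
    (hy2 : ∀ i, j' < i → i < J → y i ≤ y (i + 1)) :
    ∀ i, j' < i → i ≤ J → greedy a j' i ≤ y i := by
  have key : ∀ i, j' + 1 ≤ i → i ≤ J → greedy a j' i ≤ y i := by
    intro i hi
    induction i, hi using Nat.le_induction with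
    | base =>
      intro hJ
      rw [greedy_of_le a j' (j'+1) le_rfl]
      exact (hy1 (j'+1) (by omega) hJ).1
    | succ n hn ih =>
      intro hJ
      rw [greedy_succ a j' n hn]
      refine max_le ((ih (by omega)).trans (hy2 n (by omega) (by omega))) ?_
      exact (hy1 (n+1) (by omega) hJ).1
  intro i h1 h2; exact key i (by omega) h2

lemma frp_eq_of_reach (a b : ℕ → ℝ) (j' j : ℕ) (hj : j' < j)
    (h : reach a b j' j) :
    (∀ i, j' < i → i ≤ j → greedy a j' i ∈ Set.Icc (a i) (b i)) ∧
    frp a b j' j = (greedy a j' j : EReal) := by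
  obtain ⟨y, hy1, hy2⟩ := h
  have hdom := greedy_le a b j' j y hy1 hy2
  have hfeas : ∀ i, j' < i → i ≤ j → greedy a j' i ∈ Set.Icc (a i) (b i) := by
    intro i h1 h2
    exact ⟨a_le_greedy a j' i h1, (hdom i h1 h2).trans (hy1 i h1 h2).2⟩
  refine ⟨hfeas, le_antisymm ?_ ?_⟩
  · apply sInf_le
    exact ⟨greedy a j', hfeas, fun i h1 _ => greedy_le_succ a j' i, rfl⟩
  · apply le_sInf
    rintro t ⟨x, hx1, hx2, rfl⟩
    exact_mod_cast greedy_le a b j' j x hx1 hx2 j hj le_rfl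

lemma frp_eq_top (a b : ℕ → ℝ) (j' j : ℕ) (h : ¬ reach a b j' j) :
    frp a b j' j = ⊤ := by
  have : {t : EReal | ∃ x : ℕ → ℝ,
      (∀ i, j' < i → i ≤ j → x i ∈ Set.Icc (a i) (b i)) ∧
      (∀ i, j' < i → i < j → x i ≤ x (i + 1)) ∧ t = (x j : EReal)} = ∅ := by
    ext t
    simp only [Set.mem_setOf_eq, Set.mem_empty_iff_false, iff_false]
    rintro ⟨x, hx1, hx2, rfl⟩
    exact h ⟨x, hx1, hx2⟩
  rw [frp, this, sInf_empty]

/-- the recurrence for the first reachable point frp(j,j'). -/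
theorem frp_recurrence (a b : ℕ → ℝ) (ha : ∀ i, a i < b i)
    (j' j : ℕ) (h : j' + 1 < j) :
    max (a j : EReal) (frp a b j' (j - 1)) ≤ frp a b j' j ∧
    (frp a b j' (j - 1) ≤ (b j : EReal) →
      frp a b j' j = max (a j : EReal) (frp a b j' (j - 1))) ∧
    ((b j : EReal) < frp a b j' (j - 1) → frp a b j' j = ⊤) := by
  obtain ⟨n, rfl⟩ : ∃ n, j = n + 1 := ⟨j - 1, by omega⟩
  have hn : j' < n := by omega
  simp only [Nat.add_sub_cancel]
  by_cases hr : reach a b j' (n+1)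
  · -- reachable case
    obtain ⟨hfeas, heq⟩ := frp_eq_of_reach a b j' (n+1) (by omega) hr
    have hrn : reach a b j' n := by
      obtain ⟨y, hy1, hy2⟩ := hr
      exact ⟨y, fun i h1 h2 => hy1 i h1 (by omega), fun i h1 h2 => hy2 i h1 (by omega)⟩
    obtain ⟨hfeasn, heqn⟩ := frp_eq_of_reach a b j' n hn hrn
    have hg : greedy a j' (n+1) = max (greedy a j' n) (a (n+1)) :=
      greedy_succ a j' n (by omega)
    have hmax : max ((a (n+1) : ℝ) : EReal) (frp a b j' n) = (greedy a j' (n+1) : EReal) := by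
      rw [heqn, hg, max_comm (greedy a j' n)]
      exact (Monotone.map_max EReal.coe_strictMono.monotone).symm
    refine ⟨?_, fun _ => ?_, fun hlt => ?_⟩
    · rw [hmax, heq]
    · rw [hmax, heq]
    · exfalso
      have hle : greedy a j' n ≤ b (n+1) := (hfeas (n+1) (by omega) le_rfl).2.trans' ?_
      · rw [heqn] at hlt
        exact absurd (EReal.coe_le_coe_iff.mpr hle) (not_le.mpr hlt)
      · rw [hg]; exact le_max_left _ _
  · -- unreachable case
    have htop : frp a b j' (n+1) = ⊤ := frp_eq_top a b j' (n+1) hr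
    refine ⟨htop ▸ le_top, fun hle => ?_, fun _ => htop⟩
    exfalso
    by_cases hrn : reach a b j' n
    · -- would give reachability of n+1
      obtain ⟨hfeasn, heqn⟩ := frp_eq_of_reach a b j' n hn hrn
      rw [heqn] at hle
      have hble : greedy a j' n ≤ b (n+1) := EReal.coe_le_coe_iff.mp hle
      apply hr
      refine ⟨greedy a j', ?_, fun i h1 _ => greedy_le_succ a j' i⟩
      intro i h1 h2
      rcases Nat.lt_or_ge i (n+1) with h3 | h3
      · exact hfeasn i h1 (by omega)
      · have : i = n + 1 := by omega
        subst this
        rw [greedy_succ a j' n (by omega)]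
        exact ⟨le_max_right _ _, max_le hble (ha (n+1)).le⟩
    · rw [frp_eq_top a b j' n hrn] at hle
      exact absurd hle (EReal.coe_lt_top (b (n+1))).not_ge.elim
end
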